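/- The BFGS update of a symmetric positive definite matrix is symmetric positive definite, provided the curvature condition ⟪y, s⟫ > 0 holds. -/

import Mathlib

/-!
Write `a = ⟪s, Bs⟫ > 0`. The quadratic form of the update is
`⟪x, Bx⟫ - ⟪Bs, x⟫² / a + ⟪y, x⟫² / ⟪y, s⟫`. By the strict Cauchy–Schwarz inequality for the
inner product defined by `B`, the first two terms together are positive unless `x` is a multiple
`t • s`; in that case they cancel and the last term equals `t² ⟪y, s⟫ > 0`.
-/

open Matrix

namespace Matrix

variable {ι R : Type*}

lemma isHermitian_vecMulVec_self [CommRing R] [StarRing R] [TrivialStar R] (u : ι → R) :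
    (vecMulVec u u).IsHermitian := by
  ext i j
  simp [vecMulVec_apply, mul_comm]

lemma dotProduct_vecMulVec_self_mulVec [Fintype ι] [CommRing R] (u x : ι → R) :
    x ⬝ᵥ vecMulVec u u *ᵥ x = (u ⬝ᵥ x) ^ 2 := by
  rw [vecMulVec_mulVec, op_smul_eq_smul, dotProduct_smul, smul_eq_mul, dotProduct_comm, sq]

lemma dotProduct_sub_smul_vecMulVec_add_smul_vecMulVec_mulVec [Fintype ι] [CommRing R]
    (A : Matrix ι ι R) (u y x : ι → R) (r q : R) :
    x ⬝ᵥ (A - r • vecMulVec u u + q • vecMulVec y y) *ᵥ x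
      = x ⬝ᵥ A *ᵥ x - r * (u ⬝ᵥ x) ^ 2 + q * (y ⬝ᵥ x) ^ 2 := by
  simp only [add_mulVec, sub_mulVec, smul_mulVec, dotProduct_add, dotProduct_sub,
    dotProduct_smul, smul_eq_mul, dotProduct_vecMulVec_self_mulVec]

lemma IsSymm.dotProduct_mulVec_eq_mulVec_dotProduct [Fintype ι] [CommSemiring R]
    {B : Matrix ι ι R} (hB : B.IsSymm) (u v : ι → R) : u ⬝ᵥ B *ᵥ v = B *ᵥ u ⬝ᵥ v := by
  rw [dotProduct_mulVec, ← mulVec_transpose, hB.eq]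

lemma PosDef.sq_mulVec_dotProduct_lt [Fintype ι] {B : Matrix ι ι ℝ} (hB : B.PosDef)
    {s x : ι → ℝ} (hs : s ≠ 0) (hx : ∀ t : ℝ, x ≠ t • s) :
    (B *ᵥ s ⬝ᵥ x) ^ 2 < (s ⬝ᵥ B *ᵥ s) * (x ⬝ᵥ B *ᵥ x) := by
  have hsymm : B.IsSymm := hB.isHermitian
  have ha : 0 < s ⬝ᵥ B *ᵥ s := by simpa using hB.dotProduct_mulVec_pos hs
  -- `x - t • s` is the projection of `x` onto the `B`-orthogonal complement of `s`.
  set t := (B *ᵥ s ⬝ᵥ x) / (s ⬝ᵥ B *ᵥ s)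
  have hz : 0 < (x - t • s) ⬝ᵥ B *ᵥ (x - t • s) := by
    simpa using hB.dotProduct_mulVec_pos (sub_ne_zero.mpr (hx t))
  have hexpand : (x - t • s) ⬝ᵥ B *ᵥ (x - t • s)
      = x ⬝ᵥ B *ᵥ x - 2 * t * (B *ᵥ s ⬝ᵥ x) + t ^ 2 * (s ⬝ᵥ B *ᵥ s) := by
    simp only [mulVec_sub, mulVec_smul, dotProduct_sub, sub_dotProduct, dotProduct_smul,
      smul_dotProduct, smul_eq_mul]
    rw [hsymm.dotProduct_mulVec_eq_mulVec_dotProduct s x, dotProduct_comm x (B *ᵥ s)]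
    ring
  have ht : t * (s ⬝ᵥ B *ᵥ s) = B *ᵥ s ⬝ᵥ x := div_mul_cancel₀ _ ha.ne'
  rw [hexpand] at hz
  nlinarith

end Matrix

theorem bfgs_posdef {n : ℕ} (B : Matrix (Fin n) (Fin n) ℝ) (hB : B.PosDef)
    (s y : Fin n → ℝ) (hs : s ≠ 0) (hcurv : y ⬝ᵥ s > 0) :
    (B - (1 / (s ⬝ᵥ B.mulVec s)) • Matrix.vecMulVec (B.mulVec s) (B.mulVec s)
      + (1 / (y ⬝ᵥ s)) • Matrix.vecMulVec y y).PosDef := by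
  have ha : 0 < s ⬝ᵥ B *ᵥ s := by simpa using hB.dotProduct_mulVec_pos hs
  refine .of_dotProduct_mulVec_pos ?_ fun x hx => ?_
  · exact (hB.isHermitian.sub ((isHermitian_vecMulVec_self _).smul (.all _))).add
      ((isHermitian_vecMulVec_self y).smul (.all _))
  rw [star_trivial, dotProduct_sub_smul_vecMulVec_add_smul_vecMulVec_mulVec]
  by_cases hpar : ∃ t : ℝ, x = t • s
  · obtain ⟨t, rfl⟩ := hpar
    have ht : t ≠ 0 := by rintro rfl; simp at hx
    simp only [mulVec_smul, dotProduct_smul, smul_dotProduct, smul_eq_mul,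
      dotProduct_comm (B *ᵥ s) s]
    field_simp
    rw [sub_self, mul_zero, zero_add]
    positivity
  · push Not at hpar
    have hcs := hB.sq_mulVec_dotProduct_lt hs hpar
    have hBpart : 1 / (s ⬝ᵥ B *ᵥ s) * (B *ᵥ s ⬝ᵥ x) ^ 2 < x ⬝ᵥ B *ᵥ x := by
      rw [one_div_mul_eq_div, div_lt_iff₀ ha]
      linarith
    have hypart : 0 ≤ 1 / (y ⬝ᵥ s) * (y ⬝ᵥ x) ^ 2 := by positivity
    linarith
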